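/- arXiv:2004.07308 — 2 statements merged into one kernel-verified Lean document; each statement's English description precedes it below -/
import Mathlib

section
/- For every matroid complex Σ on a finite set I and every linear order w on I, the ordered complex (w, BC_w(Σ)), where BC_w(Σ) is the broken-circuit complex, is order-decomposable. -/
namespace OrderedComplexes

variable {α : Type*} [DecidableEq α]

/-- A (downward closed) simplicial complex, as a finite set of faces. -/
def IsComplex (S : Finset (Finset α)) : Prop := ∀ σ ∈ S, ∀ τ ⊆ σ, τ ∈ S

/-- `σ` is a facet (maximal face) of the complex `S`. -/
def IsFacet (S : Finset (Finset α)) (σ : Finset α) : Prop :=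
  σ ∈ S ∧ ∀ τ ∈ S, σ ⊆ τ → σ = τ

/-- A complex is pure if all of its facets have the same cardinality. -/
def IsPure (S : Finset (Finset α)) : Prop :=
  ∀ σ τ, IsFacet S σ → IsFacet S τ → σ.card = τ.card

/-- The restriction `Σ|T = {σ ∈ Σ : σ ⊆ T}`. -/
def restrictC (S : Finset (Finset α)) (T : Finset α) : Finset (Finset α) :=
  S.filter (· ⊆ T)

/-- The link of `τ` in `Σ`: `{ρ ∈ Σ : ρ ∩ τ = ∅ and ρ ∪ τ ∈ Σ}`. -/
def linkC (S : Finset (Finset α)) (τ : Finset α) : Finset (Finset α) :=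
  S.filter fun ρ => Disjoint ρ τ ∧ ρ ∪ τ ∈ S

/-- The lexicographically smallest (with respect to the linear order `w`, encoded as a
duplicate-free list) facet of the complex `S`, computed greedily along `w`. -/
def lexMinFacet (w : List α) (S : Finset (Finset α)) : Finset α :=
  w.foldl (fun τ a => if insert a τ ∈ S then insert a τ else τ) ∅

/-- The contraction `Σ/A`: the link in `Σ` of the lexicographically smallest facet of the
restriction `Σ|A`. -/
def contractC (w : List α) (S : Finset (Finset α)) (A : Finset α) : Finset (Finset α) :=
  linkC S (lexMinFacet w (restrictC S A))

/-- An ordered complex: a linear order `w` on a finite ground set (a duplicate-free list)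
together with a simplicial complex whose faces are subsets of the ground set. -/
def IsOrderedComplex (w : List α) (S : Finset (Finset α)) : Prop :=
  w.Nodup ∧ (∀ σ ∈ S, σ ⊆ w.toFinset) ∧ IsComplex S

/-- The join of two complexes: `{σ₁ ∪ σ₂ : σ₁ ∈ Σ₁, σ₂ ∈ Σ₂}`. -/
def joinC (S₁ S₂ : Finset (Finset α)) : Finset (Finset α) :=
  (S₁ ×ˢ S₂).image fun p => p.1 ∪ p.2

/-- `w` is a shuffle of the linear orders `w₁` and `w₂`: a linear order on the union of the
two ground sets restricting to `wᵢ` on each. -/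
def IsShuffle (w₁ w₂ w : List α) : Prop :=
  w.Nodup ∧ w.toFinset = w₁.toFinset ∪ w₂.toFinset ∧
    w.filter (fun a => decide (a ∈ w₁.toFinset)) = w₁ ∧
    w.filter (fun a => decide (a ∈ w₂.toFinset)) = w₂

/-- A Hopf class: a class of pure ordered complexes closed under shuffled joins, and under
restriction and contraction by initial segments (with all such restrictions pure).
Here the initial segment of `w` of length `k` is `(w.take k).toFinset`, the order induced on
it is `w.take k`, and the order induced on its complement is `w.drop k`. -/
def IsHopfClass (Q : Set (List α × Finset (Finset α))) : Prop :=
  (∀ p ∈ Q, IsOrderedComplex p.1 p.2 ∧ IsPure p.2) ∧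
  (∀ p₁ ∈ Q, ∀ p₂ ∈ Q, Disjoint p₁.1.toFinset p₂.1.toFinset →
    ∀ w, IsShuffle p₁.1 p₂.1 w → (w, joinC p₁.2 p₂.2) ∈ Q) ∧
  (∀ p ∈ Q, ∀ k : ℕ,
    IsPure (restrictC p.2 (p.1.take k).toFinset) ∧
    (p.1.take k, restrictC p.2 (p.1.take k).toFinset) ∈ Q) ∧
  (∀ p ∈ Q, ∀ k : ℕ,
    (p.1.drop k, contractC p.1 p.2 (p.1.take k).toFinset) ∈ Q)

/-- Order-decomposability: either `Σ` has exactly one facet, or `Σ` is pure and for every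
nonempty proper initial segment `A` of `w` both `Σ|A` and `Σ/A` are pure and (with their
induced orders) order-decomposable. -/
inductive OrderDecomposable : List α → Finset (Finset α) → Prop
  | unique (w : List α) (S : Finset (Finset α)) (σ : Finset α)
      (hσ : IsFacet S σ) (huniq : ∀ τ, IsFacet S τ → τ = σ) :
      OrderDecomposable w S
  | pure (w : List α) (S : Finset (Finset α)) (hpure : IsPure S)
      (hres_pure : ∀ k : ℕ, 0 < k → k < w.length →
        IsPure (restrictC S (w.take k).toFinset))
      (hcon_pure : ∀ k : ℕ, 0 < k → k < w.length →
        IsPure (contractC w S (w.take k).toFinset))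
      (hres : ∀ k : ℕ, 0 < k → k < w.length →
        OrderDecomposable (w.take k) (restrictC S (w.take k).toFinset))
      (hcon : ∀ k : ℕ, 0 < k → k < w.length →
        OrderDecomposable (w.drop k) (contractC w S (w.take k).toFinset)) :
      OrderDecomposable w S


/-- A matroid complex on `I`: a nonempty simplicial complex on `I` all of whose
restrictions are pure. -/
def IsMatroidComplex (I : Finset α) (S : Finset (Finset α)) : Prop :=
  S.Nonempty ∧ (∀ σ ∈ S, σ ⊆ I) ∧ (∀ σ ∈ S, ∀ τ ⊆ σ, τ ∈ S) ∧
    ∀ T ⊆ I, IsPure (restrictC S T)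

/-- A circuit of the matroid complex `S` on `I`: an inclusion-minimal subset of `I` that is
not a face. -/
def IsCircuit (I : Finset α) (S : Finset (Finset α)) (C : Finset α) : Prop :=
  C ⊆ I ∧ C ∉ S ∧ ∀ D ⊂ C, D ∈ S

/-- A broken circuit with respect to the linear order `w`: a circuit with its `w`-smallest
element removed. -/
def IsBrokenCircuit (w : List α) (I : Finset α) (S : Finset (Finset α))
    (B : Finset α) : Prop :=
  ∃ C a, IsCircuit I S C ∧ a ∈ C ∧ (∀ b ∈ C, w.idxOf a ≤ w.idxOf b) ∧ B = C.erase a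

/-- The broken-circuit complex `BC_w(Σ)`: all subsets of `I` containing no broken
circuit. -/
noncomputable def bcComplex (w : List α) (I : Finset α) (S : Finset (Finset α)) :
    Finset (Finset α) :=
  @Finset.filter _ (fun σ => ∀ B ⊆ σ, ¬ IsBrokenCircuit w I S B)
    (Classical.decPred _) I.powerset

/-!
Write `A_j` for the set of the first `j` elements of `w` and `b_j` for the greedy
(lexicographically first) facet of `BC_w(Σ)|A_j`, so that the contraction by `A_j` is the link
of `b_j`. For any complex, the greedy algorithm shows that contracting this link further by the
next `k` elements gives the link of `b_{j+k}`, and that restricting it to them gives the same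
construction for the complex restricted to `A_{j+k}`; for a loopless matroid, `BC_w(Σ)|A_{j+k}`
is the broken-circuit complex of `Σ|A_{j+k}`. So these links form a class closed under restriction
and contraction by initial segments, and it remains to see that each of them is pure. If `ρ` is a
facet of the link of `b`, then `ρ ∪ b` is a basis of `Σ`, because adding to an nbc-set the
`w`-smallest element that keeps it independent keeps it nbc.
If `Σ` has a loop, the empty set is a broken circuit and `BC_w(Σ)` is empty.
-/

open Finset

lemma mem_restrictC {S : Finset (Finset α)} {T σ : Finset α} :
    σ ∈ restrictC S T ↔ σ ∈ S ∧ σ ⊆ T := mem_filter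

lemma mem_linkC {S : Finset (Finset α)} {b ρ : Finset α} :
    ρ ∈ linkC S b ↔ ρ ∈ S ∧ Disjoint ρ b ∧ ρ ∪ b ∈ S := mem_filter

section Complexes

variable {S : Finset (Finset α)} {A A' b c ρ σ : Finset α}

lemma restrictC_restrictC (h : A ⊆ A') : restrictC (restrictC S A') A = restrictC S A := by
  ext σ
  simp only [mem_restrictC, and_assoc]
  exact and_congr_right fun _ => ⟨fun h' => h'.2, fun h' => ⟨h'.trans h, h'⟩⟩

lemma mem_linkC_iff_of_disjoint (hS : IsComplex S) (h : Disjoint ρ b) :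
    ρ ∈ linkC S b ↔ ρ ∪ b ∈ S := by
  rw [mem_linkC]
  exact ⟨fun h' => h'.2.2, fun h' => ⟨hS _ h' _ subset_union_left, h, h'⟩⟩

@[simp] lemma linkC_empty : linkC S ∅ = S := by
  ext ρ
  simp [mem_linkC]

lemma linkC_linkC (hS : IsComplex S) (hcb : Disjoint c b) :
    linkC (linkC S b) c = linkC S (c ∪ b) := by
  ext ρ
  simp only [mem_linkC, disjoint_union_left, disjoint_union_right, union_assoc]
  constructor
  · rintro ⟨⟨hρ, hρb, -⟩, hρc, -, -, h⟩
    exact ⟨hρ, ⟨hρc, hρb⟩, h⟩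
  · rintro ⟨hρ, ⟨hρc, hρb⟩, h⟩
    exact ⟨⟨hρ, hρb, hS _ h _ (union_subset_union_right subset_union_right)⟩, hρc,
      hS _ h _ (union_subset_union_right subset_union_left), ⟨hρb, hcb⟩, h⟩

lemma restrictC_linkC (hS : IsComplex S) (hbA : b ⊆ A)
    (hmax : ∀ a ∈ A, insert a b ∈ S → a ∈ b) :
    restrictC (linkC S b) A' = linkC (restrictC S (A ∪ A')) b := by
  ext ρ
  simp only [mem_restrictC, mem_linkC]
  constructor
  · rintro ⟨⟨hρ, hρb, hρbS⟩, hρA'⟩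
    exact ⟨⟨hρ, hρA'.trans subset_union_right⟩, hρb, hρbS,
      union_subset (hρA'.trans subset_union_right) (hbA.trans subset_union_left)⟩
  · rintro ⟨⟨hρ, hρAA'⟩, hρb, hρbS, -⟩
    refine ⟨⟨hρ, hρb, hρbS⟩, fun x hx => ?_⟩
    refine (mem_union.1 (hρAA' hx)).resolve_left fun hxA => disjoint_left.1 hρb hx ?_
    exact hmax x hxA (hS _ hρbS _ (insert_subset (mem_union_left _ hx) subset_union_right))

lemma exists_isFacet_superset (hσ : σ ∈ S) : ∃ F, IsFacet S F ∧ σ ⊆ F := by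
  obtain ⟨F, hF⟩ := (S.filter (σ ⊆ ·)).exists_maximal
    ⟨σ, mem_filter.2 ⟨hσ, subset_rfl⟩⟩
  obtain ⟨hFS, hσF⟩ := mem_filter.1 hF.1
  refine ⟨F, ⟨hFS, fun τ hτ hFτ => hFτ.antisymm ?_⟩, hσF⟩
  exact hF.2 (mem_filter.2 ⟨hτ, hσF.trans hFτ⟩) hFτ

end Complexes

section Greedy

variable {S : Finset (Finset α)} {l : List α} {a : α} {t b : Finset α}

def greedyExtend (S : Finset (Finset α)) (l : List α) (t : Finset α) : Finset α :=
  l.foldl (fun τ a => if insert a τ ∈ S then insert a τ else τ) t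

lemma lexMinFacet_eq_greedyExtend (w : List α) (S : Finset (Finset α)) :
    lexMinFacet w S = greedyExtend S w ∅ := rfl

@[simp] lemma greedyExtend_nil : greedyExtend S [] t = t := rfl

lemma greedyExtend_cons :
    greedyExtend S (a :: l) t = greedyExtend S l (if insert a t ∈ S then insert a t else t) := rfl

lemma greedyExtend_append {l₁ l₂ : List α} :
    greedyExtend S (l₁ ++ l₂) t = greedyExtend S l₂ (greedyExtend S l₁ t) :=
  List.foldl_append

lemma subset_greedyExtend : t ⊆ greedyExtend S l t := by
  induction l generalizing t with
  | nil => exact subset_rfl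
  | cons a l ih =>
    rw [greedyExtend_cons]
    split_ifs
    · exact (subset_insert a t).trans ih
    · exact ih

lemma greedyExtend_subset : greedyExtend S l t ⊆ t ∪ l.toFinset := by
  induction l generalizing t with
  | nil => simp
  | cons a l ih =>
    rw [greedyExtend_cons]
    refine ih.trans ?_
    split_ifs <;> intro x <;> simp only [mem_union, mem_insert, List.toFinset_cons] <;> tauto

lemma greedyExtend_eq_self (h : ∀ a ∈ l, insert a t ∉ S) : greedyExtend S l t = t := by
  induction l with
  | nil => rfl
  | cons a l ih =>
    rw [greedyExtend_cons, if_neg (h a List.mem_cons_self)]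
    exact ih fun x hx => h x (List.mem_cons_of_mem a hx)

lemma greedyExtend_restrictC {A : Finset α} (ht : t ⊆ A) (hl : ∀ a ∈ l, a ∈ A) :
    greedyExtend (restrictC S A) l t = greedyExtend S l t := by
  induction l generalizing t with
  | nil => rfl
  | cons a l ih =>
    have haA := hl a List.mem_cons_self
    have hl' : ∀ x ∈ l, x ∈ A := fun x hx => hl x (List.mem_cons_of_mem a hx)
    have hmem : insert a t ∈ restrictC S A ↔ insert a t ∈ S := by
      rw [mem_restrictC]
      exact and_iff_left (insert_subset haA ht)
    simp only [greedyExtend_cons, hmem]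
    split_ifs
    · exact ih (insert_subset haA ht) hl'
    · exact ih ht hl'

lemma greedyExtend_linkC (hS : IsComplex S) (hl : ∀ a ∈ l, a ∉ b) (ht : Disjoint t b) :
    greedyExtend (linkC S b) l t ∪ b = greedyExtend S l (t ∪ b) := by
  induction l generalizing t with
  | nil => rfl
  | cons a l ih =>
    have hat : Disjoint (insert a t) b := disjoint_insert_left.2 ⟨hl a List.mem_cons_self, ht⟩
    have hl' : ∀ x ∈ l, x ∉ b := fun x hx => hl x (List.mem_cons_of_mem a hx)
    have hmem : insert a t ∈ linkC S b ↔ insert a (t ∪ b) ∈ S := by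
      rw [mem_linkC_iff_of_disjoint hS hat, insert_union]
    simp only [greedyExtend_cons, hmem]
    split_ifs
    · rw [← insert_union]
      exact ih hl' hat
    · exact ih hl' ht

lemma mem_greedyExtend_of_insert_mem (hS : IsComplex S) (ha : a ∈ l)
    (h : insert a (greedyExtend S l t) ∈ S) : a ∈ greedyExtend S l t := by
  induction l generalizing t with
  | nil => simp at ha
  | cons x l ih =>
    rw [greedyExtend_cons] at h ⊢
    rcases List.mem_cons.1 ha with rfl | ha
    · by_cases hat : insert a t ∈ S
      · rw [if_pos hat]
        exact subset_greedyExtend (mem_insert_self a t)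
      · rw [if_neg hat] at h
        exact absurd (hS _ h _ (insert_subset_insert a subset_greedyExtend)) hat
    · exact ih ha h

end Greedy

section InitialSegments

variable {w : List α} {S : Finset (Finset α)} {j k : ℕ}

lemma contractC_take (hw : w.Nodup) :
    contractC w S (w.take j).toFinset = linkC S (greedyExtend S (w.take j) ∅) := by
  have hsplit : ∀ S', greedyExtend S' w ∅ =
      greedyExtend S' (w.drop j) (greedyExtend S' (w.take j) ∅) :=
    fun S' => by rw [← greedyExtend_append, List.take_append_drop]
  rw [contractC, lexMinFacet_eq_greedyExtend, hsplit,
    greedyExtend_restrictC (empty_subset _) fun a ha => List.mem_toFinset.2 ha]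
  refine congrArg _ (greedyExtend_eq_self fun a ha hmem => ?_)
  exact List.disjoint_take_drop hw le_rfl
    (List.mem_toFinset.1 ((mem_restrictC.1 hmem).2 (mem_insert_self a _))) ha

lemma contractC_contractC (hw : w.Nodup) (hS : IsComplex S) :
    contractC (w.drop j) (contractC w S (w.take j).toFinset) ((w.drop j).take k).toFinset =
      contractC w S (w.take (j + k)).toFinset := by
  set b := greedyExtend S (w.take j) ∅
  have hl : ∀ a ∈ (w.drop j).take k, a ∉ b := fun a ha hab =>
    List.disjoint_take_drop hw le_rfl (by simpa using greedyExtend_subset hab)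
      (List.mem_of_mem_take ha)
  have hc : Disjoint (greedyExtend (linkC S b) ((w.drop j).take k) ∅) b :=
    disjoint_left.2 fun a ha => hl a (by simpa using greedyExtend_subset ha)
  rw [contractC_take (j := j) hw, contractC_take (hw.sublist (List.drop_sublist _ _)),
    contractC_take hw, linkC_linkC hS hc, greedyExtend_linkC hS hl (disjoint_empty_left _),
    empty_union, List.take_add, greedyExtend_append]

lemma restrictC_contractC (hw : w.Nodup) (hS : IsComplex S) :
    restrictC (contractC w S (w.take j).toFinset) ((w.drop j).take k).toFinset =
      contractC (w.take (j + k)) (restrictC S (w.take (j + k)).toFinset)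
        ((w.take (j + k)).take j).toFinset := by
  have htake : (w.take (j + k)).take j = w.take j := by
    rw [List.take_take, min_eq_left (Nat.le_add_right j k)]
  have hseg : (w.take (j + k)).toFinset = (w.take j).toFinset ∪ ((w.drop j).take k).toFinset := by
    rw [List.take_add, List.toFinset_append]
  rw [contractC_take hw, contractC_take (hw.sublist (List.take_sublist _ _)), htake, hseg,
    greedyExtend_restrictC (empty_subset _) fun a ha => mem_union_left _ (List.mem_toFinset.2 ha)]
  refine restrictC_linkC hS (fun x hx => by simpa using greedyExtend_subset hx) fun a ha => ?_
  exact mem_greedyExtend_of_insert_mem hS (List.mem_toFinset.1 ha)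

end InitialSegments

theorem OrderDecomposable.of_closed (P : List α → Finset (Finset α) → Prop)
    (hpure : ∀ u K, P u K → IsPure K)
    (hres : ∀ u K k, P u K → P (u.take k) (restrictC K (u.take k).toFinset))
    (hcon : ∀ u K k, P u K → P (u.drop k) (contractC u K (u.take k).toFinset))
    {u : List α} {K : Finset (Finset α)} (h : P u K) : OrderDecomposable u K := by
  induction hn : u.length using Nat.strong_induction_on generalizing u K with
  | _ n ih =>
    refine .pure u K (hpure _ _ h) (fun k _ _ => hpure _ _ (hres _ _ k h))
      (fun k _ _ => hpure _ _ (hcon _ _ k h)) (fun k _ hk => ?_) (fun k hk _ => ?_)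
    · exact ih k (hn ▸ hk) (hres _ _ k h) (by rw [List.length_take]; omega)
    · exact ih (n - k) (by omega) (hcon _ _ k h) (by rw [List.length_drop]; omega)

theorem orderDecomposable_empty (w : List α) : OrderDecomposable w ∅ :=
  OrderDecomposable.of_closed (fun _ K => K = ∅)
    (by rintro _ _ rfl σ _ hσ; exact absurd hσ.1 (notMem_empty σ))
    (by rintro _ _ _ rfl; exact filter_empty _) (by rintro _ _ _ rfl; exact filter_empty _) rfl

section Matroids

variable {I T X C V : Finset α} {M : Finset (Finset α)} {a c : α}

lemma IsMatroidComplex.empty_mem (hM : IsMatroidComplex I M) : ∅ ∈ M := by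
  obtain ⟨σ, hσ⟩ := hM.1
  exact hM.2.2.1 σ hσ ∅ (empty_subset σ)

lemma IsMatroidComplex.isPure (hM : IsMatroidComplex I M) : IsPure M := by
  have h := hM.2.2.2 I subset_rfl
  rwa [restrictC, filter_true_of_mem hM.2.1] at h

lemma IsMatroidComplex.restrict (hM : IsMatroidComplex I M) (hT : T ⊆ I) :
    IsMatroidComplex T (restrictC M T) := by
  refine ⟨⟨∅, mem_restrictC.2 ⟨hM.empty_mem, empty_subset T⟩⟩,
    fun σ hσ => (mem_restrictC.1 hσ).2, fun σ hσ τ hτσ => ?_, fun T' hT' => ?_⟩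
  · obtain ⟨hσM, hσT⟩ := mem_restrictC.1 hσ
    exact mem_restrictC.2 ⟨hM.2.2.1 σ hσM τ hτσ, hτσ.trans hσT⟩
  · rw [restrictC_restrictC hT']
    exact hM.2.2.2 T' (hT'.trans hT)

lemma exists_isCircuit_subset (hXI : X ⊆ I) (hXM : X ∉ M) : ∃ C ⊆ X, IsCircuit I M C := by
  obtain ⟨C, hC⟩ := (X.powerset.filter (· ∉ M)).exists_minimal
    ⟨X, mem_filter.2 ⟨mem_powerset_self X, hXM⟩⟩
  obtain ⟨hCX, hCM⟩ := mem_filter.1 hC.1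
  rw [mem_powerset] at hCX
  refine ⟨C, hCX, hCX.trans hXI, hCM, fun D hDC => ?_⟩
  by_contra hDM
  exact hDC.not_subset
    (hC.2 (mem_filter.2 ⟨mem_powerset.2 (hDC.subset.trans hCX), hDM⟩) hDC.subset)

lemma isCircuit_restrictC_iff (hT : T ⊆ I) :
    IsCircuit T (restrictC M T) C ↔ IsCircuit I M C ∧ C ⊆ T := by
  simp only [IsCircuit, mem_restrictC]
  constructor
  · rintro ⟨hCT, hCM, hD⟩
    exact ⟨⟨hCT.trans hT, fun h => hCM ⟨h, hCT⟩, fun D hD' => (hD D hD').1⟩, hCT⟩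
  · rintro ⟨⟨-, hCM, hD⟩, hCT⟩
    exact ⟨hCT, fun h => hCM h.1, fun D hD' => ⟨hD D hD', hD'.subset.trans hCT⟩⟩

/-- In `Σ|T` with `T = V + a + c`, the set `V + a` is a facet, while a facet through `C \ a`
must avoid `a` and hence is a proper subset of `V + c` if `V + c` is dependent. -/
lemma insert_mem_of_isCircuit (hM : IsMatroidComplex I M) (hC : IsCircuit I M C)
    (haC : a ∈ C) (hcC : c ∈ C) (haV : a ∉ V) (hCV : C ⊆ insert a (insert c V))
    (haVM : insert a V ∈ M) : insert c V ∈ M := by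
  by_contra hcVM
  set T := insert a (insert c V)
  have hTI : T ⊆ I := insert_subset (hC.1 haC)
    (insert_subset (hC.1 hcC) ((subset_insert a V).trans (hM.2.1 _ haVM)))
  have hCM : ∀ ρ ∈ M, ¬ C ⊆ ρ := fun ρ hρ hCρ => hC.2.1 (hM.2.2.1 ρ hρ C hCρ)
  have haVF : IsFacet (restrictC M T) (insert a V) := by
    refine ⟨mem_restrictC.2 ⟨haVM, insert_subset_insert a (subset_insert c V)⟩,
      fun ρ hρ haVρ => ?_⟩
    obtain ⟨hρM, hρT⟩ := mem_restrictC.1 hρ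
    by_contra hne
    obtain ⟨x, hxρ, hxaV⟩ := exists_of_ssubset (haVρ.ssubset_of_ne hne)
    have hxc : x = c := by
      have hxT := hρT hxρ
      simp only [T, mem_insert] at hxT hxaV
      tauto
    subst hxc
    exact hCM ρ hρM (hCV.trans (insert_subset (haVρ (mem_insert_self a V))
      (insert_subset hxρ ((subset_insert a V).trans haVρ))))
  obtain ⟨G, hG, hCG⟩ := exists_isFacet_superset
    (mem_restrictC.2 ⟨hC.2.2 _ (erase_ssubset haC), (erase_subset a C).trans hCV⟩ :
      C.erase a ∈ restrictC M T)
  obtain ⟨hGM, hGT⟩ := mem_restrictC.1 hG.1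
  have haG : a ∉ G := fun haG => hCM G hGM fun x hx => by
    by_cases hxa : x = a
    · exact hxa ▸ haG
    · exact hCG (mem_erase.2 ⟨hxa, hx⟩)
  have hGcV : G ⊂ insert c V := by
    refine ssubset_of_subset_of_ne (fun x hx => ?_) fun h => hcVM (h ▸ hGM)
    exact (mem_insert.1 (hGT hx)).resolve_left fun h => haG (h ▸ hx)
  have hcard := hM.2.2.2 T hTI _ _ hG haVF
  have := card_lt_card hGcV
  have := card_insert_le c V
  rw [card_insert_of_notMem haV] at hcard
  omega

end Matroids

section BrokenCircuits

variable {w : List α} {I T B : Finset α} {M : Finset (Finset α)} {a : α}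

lemma mem_bcComplex {σ : Finset α} :
    σ ∈ bcComplex w I M ↔ σ ⊆ I ∧ ∀ B ⊆ σ, ¬ IsBrokenCircuit w I M B := by
  rw [bcComplex, @mem_filter _ _ (Classical.decPred _), mem_powerset]

lemma isComplex_bcComplex : IsComplex (bcComplex w I M) := fun _ hσ _ hτσ =>
  mem_bcComplex.2 ⟨hτσ.trans (mem_bcComplex.1 hσ).1,
    fun B hB => (mem_bcComplex.1 hσ).2 B (hB.trans hτσ)⟩

lemma bcComplex_subset (hM : IsMatroidComplex I M) : bcComplex w I M ⊆ M := by
  intro σ hσ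
  obtain ⟨hσI, hσB⟩ := mem_bcComplex.1 hσ
  by_contra hσM
  obtain ⟨C, hCσ, hC⟩ := exists_isCircuit_subset hσI hσM
  have hCne : C.Nonempty := nonempty_iff_ne_empty.2 fun h => hC.2.1 (h ▸ hM.empty_mem)
  obtain ⟨a, haC, hmin⟩ := C.exists_min_image w.idxOf hCne
  exact hσB _ ((erase_subset a C).trans hCσ) ⟨C, a, hC, haC, hmin, rfl⟩

lemma bcComplex_eq_empty_of_loop (hM : IsMatroidComplex I M) (haI : a ∈ I) (ha : {a} ∉ M) :
    bcComplex w I M = ∅ := by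
  refine eq_empty_of_forall_notMem fun σ hσ => (mem_bcComplex.1 hσ).2 ∅ (empty_subset σ) ?_
  refine ⟨{a}, a, ⟨singleton_subset_iff.2 haI, ha, fun D hD => ?_⟩, mem_singleton_self a,
    fun b hb => by rw [mem_singleton.1 hb], by simp⟩
  rw [ssubset_singleton_iff.1 hD]
  exact hM.empty_mem

/-- A broken circuit `C \ c` inside `insert a T` must contain `a`, with `c` before `a` and
`c ∉ T`; exchanging `a` for `c` in the circuit makes `insert c T` independent, against the
minimality of `a`. -/
lemma insert_mem_bcComplex (hM : IsMatroidComplex w.toFinset M)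
    (hT : T ∈ bcComplex w w.toFinset M) (haT : a ∉ T) (haTM : insert a T ∈ M)
    (hmin : ∀ c ∉ T, insert c T ∈ M → w.idxOf a ≤ w.idxOf c) :
    insert a T ∈ bcComplex w w.toFinset M := by
  refine mem_bcComplex.2 ⟨hM.2.1 _ haTM, ?_⟩
  rintro _ hB ⟨C, c, hC, hcC, hcmin, rfl⟩
  have haC : a ∈ C.erase c := by
    by_contra haC
    refine (mem_bcComplex.1 hT).2 _ (fun x hx => ?_) ⟨C, c, hC, hcC, hcmin, rfl⟩
    exact (mem_insert.1 (hB hx)).resolve_left fun h => haC (h ▸ hx)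
  have hCsub : C ⊆ insert c (insert a T) := fun x hx => by
    by_cases hxc : x = c
    · rw [hxc]
      exact mem_insert_self c _
    · exact mem_insert_of_mem (hB (mem_erase.2 ⟨hxc, hx⟩))
  have hcT : c ∉ T := fun hcT => hC.2.1 (hM.2.2.1 _ haTM C
    (hCsub.trans (insert_subset (mem_insert_of_mem hcT) subset_rfl)))
  have hca : w.idxOf c < w.idxOf a := (hcmin a (mem_of_mem_erase haC)).lt_of_ne fun h =>
    ne_of_mem_erase haC ((List.idxOf_inj (List.mem_toFinset.1 (hC.1 hcC))).1 h).symm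
  refine absurd (hmin c hcT (insert_mem_of_isCircuit hM hC (mem_of_mem_erase haC) hcC haT
    ?_ haTM)) (not_le.2 hca)
  rwa [insert_comm]

lemma exists_insert_mem_bcComplex (hM : IsMatroidComplex w.toFinset M)
    (hT : T ∈ bcComplex w w.toFinset M) (hTM : ¬ IsFacet M T) :
    ∃ a ∉ T, insert a T ∈ bcComplex w w.toFinset M := by
  obtain ⟨ξ, hξ, hTξ, hne⟩ : ∃ ξ ∈ M, T ⊆ ξ ∧ T ≠ ξ := by
    simpa [IsFacet, bcComplex_subset hM hT] using hTM
  obtain ⟨y, hyξ, hyT⟩ := exists_of_ssubset (hTξ.ssubset_of_ne hne)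
  set Y := w.toFinset.filter fun x => x ∉ T ∧ insert x T ∈ M
  have hyY : y ∈ Y :=
    mem_filter.2 ⟨hM.2.1 ξ hξ hyξ, hyT, hM.2.2.1 ξ hξ _ (insert_subset hyξ hTξ)⟩
  obtain ⟨a, haY, hmin⟩ := Y.exists_min_image w.idxOf ⟨y, hyY⟩
  obtain ⟨-, haT, haTM⟩ := mem_filter.1 haY
  refine ⟨a, haT, insert_mem_bcComplex hM hT haT haTM fun c hcT hcTM => hmin c ?_⟩
  exact mem_filter.2 ⟨hM.2.1 _ hcTM (mem_insert_self c T), hcT, hcTM⟩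

lemma isPure_linkC_bcComplex (hM : IsMatroidComplex w.toFinset M) (b : Finset α) :
    IsPure (linkC (bcComplex w w.toFinset M) b) := by
  have hbasis :
      ∀ ρ, IsFacet (linkC (bcComplex w w.toFinset M) b) ρ → IsFacet M (ρ ∪ b) := by
    intro ρ hρ
    obtain ⟨-, hρb, hρbBC⟩ := mem_linkC.1 hρ.1
    by_contra hρbM
    obtain ⟨a, ha, haBC⟩ := exists_insert_mem_bcComplex hM hρbBC hρbM
    have haρ : insert a ρ ∈ linkC (bcComplex w w.toFinset M) b := by
      rw [mem_linkC_iff_of_disjoint isComplex_bcComplex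
        (disjoint_insert_left.2 ⟨fun h => ha (mem_union_right _ h), hρb⟩), insert_union]
      exact haBC
    refine ha (mem_union_left _ ?_)
    rw [hρ.2 _ haρ (subset_insert a ρ)]
    exact mem_insert_self a ρ
  intro ρ ρ' hρ hρ'
  have hcard := hM.isPure _ _ (hbasis ρ hρ) (hbasis ρ' hρ')
  rwa [card_union_of_disjoint (mem_linkC.1 hρ.1).2.1,
    card_union_of_disjoint (mem_linkC.1 hρ'.1).2.1, Nat.add_right_cancel_iff] at hcard

lemma isBrokenCircuit_take_iff (hloop : ∀ a ∈ w, {a} ∈ M) {p : ℕ}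
    (hB : B ⊆ (w.take p).toFinset) :
    IsBrokenCircuit (w.take p) (w.take p).toFinset (restrictC M (w.take p).toFinset) B ↔
      IsBrokenCircuit w w.toFinset M B := by
  have hsub : (w.take p).toFinset ⊆ w.toFinset := fun x hx =>
    List.mem_toFinset.2 (List.mem_of_mem_take (List.mem_toFinset.1 hx))
  have hidx : ∀ {x}, x ∈ w.take p → (w.take p).idxOf x = w.idxOf x :=
    fun hx => (w.take_prefix p).idxOf_eq_of_mem hx
  constructor
  · rintro ⟨C, a, hC, haC, hmin, rfl⟩
    obtain ⟨hC, hCp⟩ := (isCircuit_restrictC_iff hsub).1 hC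
    refine ⟨C, a, hC, haC, fun b hb => ?_, rfl⟩
    rw [← hidx (List.mem_toFinset.1 (hCp haC)), ← hidx (List.mem_toFinset.1 (hCp hb))]
    exact hmin b hb
  · rintro ⟨C, a, hC, haC, hmin, rfl⟩
    have haw : a ∈ w := List.mem_toFinset.1 (hC.1 haC)
    -- `C ≠ {a}` as `Σ` is loopless, so `a` precedes some `b ∈ C \ a` in `w.take p`
    obtain ⟨b, hb⟩ : (C.erase a).Nonempty := by
      rw [nonempty_iff_ne_empty, Ne, erase_eq_empty_iff]
      rintro (h | h)
      · exact notMem_empty a (h ▸ haC)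
      · exact hC.2.1 (h ▸ hloop a haw)
    have hbp : b ∈ w.take p := List.mem_toFinset.1 (hB hb)
    have hap : a ∈ w.take p := (List.mem_take_iff_idxOf_lt haw).2 <|
      (hmin b (mem_of_mem_erase hb)).trans_lt <|
        (List.mem_take_iff_idxOf_lt (List.mem_of_mem_take hbp)).1 hbp
    have hCp : C ⊆ (w.take p).toFinset := fun x hx => by
      by_cases hxa : x = a
      · exact List.mem_toFinset.2 (hxa ▸ hap)
      · exact hB (mem_erase.2 ⟨hxa, hx⟩)
    refine ⟨C, a, (isCircuit_restrictC_iff hsub).2 ⟨hC, hCp⟩, haC, fun x hx => ?_, rfl⟩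
    rw [hidx hap, hidx (List.mem_toFinset.1 (hCp hx))]
    exact hmin x hx

lemma restrictC_take_bcComplex (hloop : ∀ a ∈ w, {a} ∈ M) (p : ℕ) :
    restrictC (bcComplex w w.toFinset M) (w.take p).toFinset =
      bcComplex (w.take p) (w.take p).toFinset (restrictC M (w.take p).toFinset) := by
  ext σ
  rw [mem_restrictC, mem_bcComplex, mem_bcComplex]
  constructor
  · rintro ⟨⟨-, hσB⟩, hσp⟩
    exact ⟨hσp, fun B hBσ hB =>
      hσB B hBσ ((isBrokenCircuit_take_iff hloop (hBσ.trans hσp)).1 hB)⟩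
  · rintro ⟨hσp, hσB⟩
    refine ⟨⟨fun x hx => ?_, fun B hBσ hB => ?_⟩, hσp⟩
    · exact List.mem_toFinset.2 (List.mem_of_mem_take (List.mem_toFinset.1 (hσp hx)))
    · exact hσB B hBσ ((isBrokenCircuit_take_iff hloop (hBσ.trans hσp)).2 hB)

theorem orderDecomposable_contractC_bcComplex (hw : w.Nodup)
    (hM : IsMatroidComplex w.toFinset M) (hloop : ∀ a ∈ w, {a} ∈ M) (j : ℕ) :
    OrderDecomposable (w.drop j) (contractC w (bcComplex w w.toFinset M) (w.take j).toFinset) := by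
  refine OrderDecomposable.of_closed
    (fun u K => ∃ (w : List α) (M : Finset (Finset α)) (j : ℕ),
      w.Nodup ∧ IsMatroidComplex w.toFinset M ∧ (∀ a ∈ w, {a} ∈ M) ∧ u = w.drop j ∧
        K = contractC w (bcComplex w w.toFinset M) (w.take j).toFinset)
    ?_ ?_ ?_ ⟨w, M, j, hw, hM, hloop, rfl, rfl⟩
  · rintro _ _ ⟨w, M, j, hw, hM, -, rfl, rfl⟩
    rw [contractC_take hw]
    exact isPure_linkC_bcComplex hM _
  · rintro _ _ k ⟨w, M, j, hw, hM, hloop, rfl, rfl⟩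
    have hsub : (w.take (j + k)).toFinset ⊆ w.toFinset := fun x hx =>
      List.mem_toFinset.2 (List.mem_of_mem_take (List.mem_toFinset.1 hx))
    refine ⟨w.take (j + k), restrictC M (w.take (j + k)).toFinset, j,
      hw.sublist (List.take_sublist _ _), hM.restrict hsub, fun a ha => ?_, ?_, ?_⟩
    · exact mem_restrictC.2 ⟨hloop a (List.mem_of_mem_take ha),
        singleton_subset_iff.2 (List.mem_toFinset.2 ha)⟩
    · rw [List.drop_take, Nat.add_sub_cancel_left]
    · rw [restrictC_contractC hw isComplex_bcComplex, restrictC_take_bcComplex hloop]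
  · rintro _ _ k ⟨w, M, j, hw, hM, hloop, rfl, rfl⟩
    exact ⟨w, M, j + k, hw, hM, hloop, List.drop_drop,
      contractC_contractC hw isComplex_bcComplex⟩

end BrokenCircuits

/-- For every matroid complex `Σ` on a finite set `I` and every linear order `w` on `I`, the
ordered complex `(w, BC_w(Σ))` is order-decomposable. -/
theorem orderDecomposable_of_brokenCircuitComplex (w : List α) (hw : w.Nodup)
    (S : Finset (Finset α)) (hS : IsMatroidComplex w.toFinset S) :
    OrderDecomposable w (bcComplex w w.toFinset S) := by
  by_cases hloop : ∀ a ∈ w, {a} ∈ S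
  · have h := orderDecomposable_contractC_bcComplex hw hS hloop 0
    rwa [contractC_take hw, List.take_zero, greedyExtend_nil, linkC_empty, List.drop_zero] at h
  · obtain ⟨a, ha, haS⟩ := not_forall₂.1 hloop
    rw [bcComplex_eq_empty_of_loop hS (List.mem_toFinset.2 ha) haS]
    exact orderDecomposable_empty w

end OrderedComplexes
end

section
/- For every preposet Q on [n], the union ⋃_{A ∈ C_Q} σ_A of the open braid cones over the album C_Q of Q is a closed convex set, and it equals the topological closure of ⋃_R σ_R, where R ranges over the set compositions corresponding to the linear extensions of Q. -/
/-!
The union of the cones over the album of `Q` is the polyhedral cone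
`{x | Q i j → x i ≤ x j}`, which is closed and convex: a point `x` of it lies in the cone of
the composition of `[n]` into the level sets of `x`, and that composition is in the album.
For the closure, extend `Q` to a linear order `r` whose fibres are the `≡_Q`-classes and take
the composition `R` into the level sets of `i ↦ (x i, r i)`, ordered lexicographically.
Then `R` is a linear extension of `Q`, and `x + t • blockIdx R` lies in the cone of `R`
for every `t > 0`, so `x` lies in its closure.
-/

namespace BraidFan

/-- A set composition of `[n]`: an ordered list of nonempty, pairwise disjoint subsets
(blocks) of `[n]` whose union is `[n]`. -/
def IsSetComp (n : ℕ) (A : List (Finset (Fin n))) : Prop :=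
  (∀ B ∈ A, B.Nonempty) ∧ A.Pairwise Disjoint ∧ A.foldr (· ∪ ·) ∅ = Finset.univ

/-- The index of the block of `A` containing `i`. -/
def blockIdx {n : ℕ} (A : List (Finset (Fin n))) (i : Fin n) : ℕ :=
  A.findIdx fun B => decide (i ∈ B)

/-- The open braid cone of a set composition `A`:
`σ_A = {x ∈ ℝ^n : x_i = x_j if i ≡_A j, and x_i < x_j if i ≺_A j}`. -/
def braidCone {n : ℕ} (A : List (Finset (Fin n))) : Set (Fin n → ℝ) :=
  {x | ∀ i j : Fin n,
    (blockIdx A i = blockIdx A j → x i = x j) ∧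
    (blockIdx A i < blockIdx A j → x i < x j)}

/-- `A` refines `B` (written `A ⊵ B`): every block of `B` is a union of consecutive blocks
of `A`, in order.  Formally, `A` can be split into consecutive nonempty chunks whose unions
are, in order, the blocks of `B`. -/
def Refines {n : ℕ} (A B : List (Finset (Fin n))) : Prop :=
  ∃ P : List (List (Finset (Fin n))), (∀ l ∈ P, l ≠ []) ∧ P.flatten = A ∧
    B = P.map fun l => l.foldr (· ∪ ·) ∅


/-- The `≡_Q`-equivalence class of `i` for a preposet (reflexive transitive relation) `Q`. -/
noncomputable def eqClass {n : ℕ} (Q : Fin n → Fin n → Prop) (i : Fin n) : Finset (Fin n) :=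
  @Finset.filter _ (fun j => Q i j ∧ Q j i) (Classical.decPred _) Finset.univ

/-- The album (closure) of a preposet `Q`:
`C_Q = {A : i ≼_Q j implies i ≼_A j}`. -/
def albumOf {n : ℕ} (Q : Fin n → Fin n → Prop) : Set (List (Finset (Fin n))) :=
  {A | IsSetComp n A ∧ ∀ i j, Q i j → blockIdx A i ≤ blockIdx A j}

/-- A linear extension of the preposet `Q`: a set composition whose blocks are exactly the
`≡_Q`-equivalence classes and whose order extends `Q`. -/
def IsLinExt {n : ℕ} (Q : Fin n → Fin n → Prop) (R : List (Finset (Fin n))) : Prop :=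
  IsSetComp n R ∧ (∀ B ∈ R, ∃ i, B = eqClass Q i) ∧
    ∀ i j, Q i j → blockIdx R i ≤ blockIdx R j

universe u

lemma exists_linearExtension_of_isPreorder {α : Type u} (Q : α → α → Prop) [IsPreorder α Q] :
    ∃ (β : Type u) (_ : LinearOrder β) (r : α → β),
      (∀ i j, Q i j → r i ≤ r j) ∧ ∀ i j, r i = r j ↔ Q i j ∧ Q j i := by
  let _ : Preorder α := { le := Q, le_refl := refl_of Q, le_trans := fun _ _ _ => trans_of Q }
  exact ⟨LinearExtension (Antisymmetrization α (· ≤ ·)), inferInstance,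
    fun i => toLinearExtension (toAntisymmetrization (· ≤ ·) i),
    fun i j h => toLinearExtension.monotone (toAntisymmetrization_mono h), fun _ _ => Quotient.eq⟩

section LevelComp

variable {n : ℕ} {α : Type*} [LinearOrder α]

open Finset

/-- The fibres of `f`, in increasing order of their value. -/
def levelComp (f : Fin n → α) : List (Finset (Fin n)) :=
  List.ofFn fun m => univ.filter fun i => f i = (univ.image f).orderEmbOfFin rfl m

def levelIdx (f : Fin n → α) (i : Fin n) : Fin (univ.image f).card :=
  ((univ.image f).orderIsoOfFin rfl).symm ⟨f i, mem_image_of_mem f (mem_univ i)⟩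

lemma apply_eq_orderEmbOfFin_iff (f : Fin n → α) (i : Fin n) (m : Fin (univ.image f).card) :
    f i = (univ.image f).orderEmbOfFin rfl m ↔ m = levelIdx f i := by
  rw [levelIdx, OrderIso.eq_symm_apply, Subtype.ext_iff, coe_orderIsoOfFin_apply, eq_comm]

lemma mem_levelComp_getElem (f : Fin n → α) (i : Fin n) (m : Fin (univ.image f).card) :
    i ∈ (levelComp f)[(m : ℕ)]'(by simp [levelComp]) ↔ m = levelIdx f i := by
  simp only [levelComp, List.getElem_ofFn, mem_filter, mem_univ, true_and,
    apply_eq_orderEmbOfFin_iff]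

lemma blockIdx_levelComp (f : Fin n → α) (i : Fin n) :
    blockIdx (levelComp f) i = levelIdx f i := by
  rw [blockIdx, List.findIdx_eq (by simp [levelComp])]
  simp only [decide_eq_true_eq, decide_eq_false_iff_not]
  refine ⟨(mem_levelComp_getElem f i _).2 rfl, fun j hj hmem => ?_⟩
  have := (mem_levelComp_getElem f i ⟨j, hj.trans (levelIdx f i).2⟩).1 hmem
  exact hj.ne (congrArg Fin.val this)

lemma blockIdx_levelComp_lt_iff {f : Fin n → α} {i j : Fin n} :
    blockIdx (levelComp f) i < blockIdx (levelComp f) j ↔ f i < f j := by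
  rw [blockIdx_levelComp, blockIdx_levelComp, Fin.val_fin_lt, levelIdx, levelIdx,
    OrderIso.lt_iff_lt, Subtype.mk_lt_mk]

lemma blockIdx_levelComp_le_iff {f : Fin n → α} {i j : Fin n} :
    blockIdx (levelComp f) i ≤ blockIdx (levelComp f) j ↔ f i ≤ f j := by
  simp only [← not_lt, blockIdx_levelComp_lt_iff]

lemma blockIdx_levelComp_eq_iff {f : Fin n → α} {i j : Fin n} :
    blockIdx (levelComp f) i = blockIdx (levelComp f) j ↔ f i = f j := by
  simp only [le_antisymm_iff, blockIdx_levelComp_le_iff]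

lemma mem_foldr_union {β : Type*} [DecidableEq β] {l : List (Finset β)} {a : β} :
    a ∈ l.foldr (· ∪ ·) ∅ ↔ ∃ B ∈ l, a ∈ B := by
  induction l with
  | nil => simp
  | cons B l ih => simp [ih]

lemma mem_levelComp {f : Fin n → α} {B : Finset (Fin n)} :
    B ∈ levelComp f ↔ ∃ i, B = univ.filter fun j => f j = f i := by
  simp only [levelComp, List.mem_ofFn]
  constructor
  · rintro ⟨m, rfl⟩
    obtain ⟨i, -, hi⟩ := mem_image.mp ((univ.image f).orderIsoOfFin rfl m).2
    exact ⟨i, by rw [hi, coe_orderIsoOfFin_apply]⟩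
  · rintro ⟨i, rfl⟩
    exact ⟨levelIdx f i, by simp only [(apply_eq_orderEmbOfFin_iff f i _).2 rfl]⟩

lemma isSetComp_levelComp (f : Fin n → α) : IsSetComp n (levelComp f) := by
  refine ⟨fun B hB => ?_, ?_, ?_⟩
  · obtain ⟨i, rfl⟩ := mem_levelComp.1 hB
    exact ⟨i, by simp⟩
  · rw [levelComp, List.pairwise_ofFn]
    intro m m' hmm'
    refine disjoint_filter.mpr fun i _ hi hi' => hmm'.ne ?_
    rw [apply_eq_orderEmbOfFin_iff] at hi hi'
    rw [hi, hi']
  · ext i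
    simp only [mem_foldr_union, mem_univ, iff_true]
    exact ⟨_, mem_levelComp.2 ⟨i, rfl⟩, by simp⟩

end LevelComp

section Cones

variable {n : ℕ}

open Filter Topology

def preposetCone (Q : Fin n → Fin n → Prop) : Set (Fin n → ℝ) :=
  {x | ∀ i j, Q i j → x i ≤ x j}

lemma isClosed_preposetCone (Q : Fin n → Fin n → Prop) : IsClosed (preposetCone Q) := by
  simp only [preposetCone, Set.ofPred_forall]
  exact isClosed_iInter fun i => isClosed_iInter fun j => isClosed_iInter fun _ =>
    isClosed_le (continuous_apply i) (continuous_apply j)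

lemma convex_preposetCone (Q : Fin n → Fin n → Prop) : Convex ℝ (preposetCone Q) := by
  intro x hx y hy a b ha hb _ i j hij
  simp only [Pi.add_apply, Pi.smul_apply, smul_eq_mul]
  gcongr
  exacts [hx i j hij, hy i j hij]

lemma braidCone_subset_preposetCone {Q : Fin n → Fin n → Prop} {A : List (Finset (Fin n))}
    (hA : ∀ i j, Q i j → blockIdx A i ≤ blockIdx A j) : braidCone A ⊆ preposetCone Q := by
  intro x hx i j hij
  rcases (hA i j hij).lt_or_eq with hlt | heq
  exacts [((hx i j).2 hlt).le, ((hx i j).1 heq).le]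

lemma mem_closure_braidCone {A : List (Finset (Fin n))} {x : Fin n → ℝ}
    (heq : ∀ i j, blockIdx A i = blockIdx A j → x i = x j)
    (hlt : ∀ i j, blockIdx A i < blockIdx A j → x i ≤ x j) : x ∈ closure (braidCone A) := by
  set v : Fin n → ℝ := fun i => blockIdx A i
  have htendsto : Tendsto (fun t : ℝ => x + t • v) (𝓝[>] 0) (𝓝 x) := by
    have : Tendsto (fun t : ℝ => x + t • v) (𝓝 0) (𝓝 (x + (0 : ℝ) • v)) :=
      (continuous_const.add (continuous_id.smul continuous_const)).tendsto 0
    rw [zero_smul, add_zero] at this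
    exact this.mono_left nhdsWithin_le_nhds
  refine mem_closure_of_tendsto htendsto (eventually_nhdsWithin_of_forall fun t (ht : 0 < t) i j =>
    ⟨fun h => ?_, fun h => ?_⟩)
  · simp [v, h, heq i j h]
  · have : t * blockIdx A i < t * blockIdx A j := by gcongr
    simp only [Pi.add_apply, Pi.smul_apply, smul_eq_mul, v]
    linarith [hlt i j h]

end Cones

section Album

variable {n : ℕ}

lemma self_mem_braidCone_levelComp (x : Fin n → ℝ) : x ∈ braidCone (levelComp x) := fun _ _ =>
  ⟨blockIdx_levelComp_eq_iff.1, blockIdx_levelComp_lt_iff.1⟩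

lemma levelComp_mem_albumOf {Q : Fin n → Fin n → Prop} {x : Fin n → ℝ}
    (hx : x ∈ preposetCone Q) : levelComp x ∈ albumOf Q :=
  ⟨isSetComp_levelComp x, fun i j hij => blockIdx_levelComp_le_iff.2 (hx i j hij)⟩

lemma iUnion_albumOf_braidCone (Q : Fin n → Fin n → Prop) :
    ⋃ A ∈ albumOf Q, braidCone A = preposetCone Q :=
  (Set.iUnion₂_subset fun _ hA => braidCone_subset_preposetCone hA.2).antisymm fun x hx =>
    Set.mem_biUnion (levelComp_mem_albumOf hx) (self_mem_braidCone_levelComp x)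

end Album

section LinearExtensions

variable {n : ℕ} {Q : Fin n → Fin n → Prop} {β : Type*} [LinearOrder β] {r : Fin n → β}

lemma mem_eqClass {i j : Fin n} : j ∈ eqClass Q i ↔ Q i j ∧ Q j i := by
  simp [eqClass]

lemma isLinExt_levelComp_toLex (hr_mono : ∀ i j, Q i j → r i ≤ r j)
    (hr_eq : ∀ i j, r i = r j ↔ Q i j ∧ Q j i) {x : Fin n → ℝ} (hx : x ∈ preposetCone Q) :
    IsLinExt Q (levelComp fun i => toLex (x i, r i)) := by
  refine ⟨isSetComp_levelComp _, fun B hB => ?_, fun i j hij => ?_⟩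
  · obtain ⟨i, rfl⟩ := mem_levelComp.1 hB
    refine ⟨i, Finset.ext fun j => ?_⟩
    simp only [Finset.mem_filter, Finset.mem_univ, true_and, toLex_inj, Prod.mk.injEq, hr_eq,
      mem_eqClass]
    exact ⟨fun h => ⟨h.2.2, h.2.1⟩, fun h => ⟨le_antisymm (hx j i h.2) (hx i j h.1), h.2, h.1⟩⟩
  · rw [blockIdx_levelComp_le_iff, Prod.Lex.toLex_le_toLex]
    exact (hx i j hij).lt_or_eq.imp_right fun h => ⟨h, hr_mono i j hij⟩

lemma mem_closure_braidCone_levelComp_toLex (x : Fin n → ℝ) (r : Fin n → β) :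
    x ∈ closure (braidCone (levelComp fun i => toLex (x i, r i))) := by
  refine mem_closure_braidCone (fun i j h => ?_) (fun i j h => ?_)
  · exact congrArg Prod.fst (toLex_inj.1 (blockIdx_levelComp_eq_iff.1 h))
  · rcases Prod.Lex.toLex_lt_toLex.1 (blockIdx_levelComp_lt_iff.1 h) with h | h
    exacts [h.le, h.1.le]

lemma preposetCone_subset_closure_iUnion_isLinExt [IsPreorder (Fin n) Q] :
    preposetCone Q ⊆ closure (⋃ R ∈ {R | IsLinExt Q R}, braidCone R) := by
  obtain ⟨β, _, r, hr_mono, hr_eq⟩ := exists_linearExtension_of_isPreorder Q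
  intro x hx
  exact closure_mono (Set.subset_biUnion_of_mem (u := braidCone)
    (isLinExt_levelComp_toLex hr_mono hr_eq hx)) (mem_closure_braidCone_levelComp_toLex x r)

end LinearExtensions

/-- For every preposet `Q` on `[n]`, the union of the open braid cones over the album `C_Q`
is a closed convex set, and it equals the topological closure of the union of the cones of
the linear extensions of `Q`. -/
theorem album_union_closed_convex (n : ℕ) (Q : Fin n → Fin n → Prop)
    (hrefl : Reflexive Q) (htrans : Transitive Q) :
    IsClosed (⋃ A ∈ albumOf Q, braidCone A) ∧
    Convex ℝ (⋃ A ∈ albumOf Q, braidCone A) ∧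
    (⋃ A ∈ albumOf Q, braidCone A) =
      closure (⋃ R ∈ {R | IsLinExt Q R}, braidCone R) := by
  have : IsPreorder (Fin n) Q := { refl := hrefl, trans := fun _ _ _ => @htrans _ _ _ }
  rw [iUnion_albumOf_braidCone]
  refine ⟨isClosed_preposetCone Q, convex_preposetCone Q,
    preposetCone_subset_closure_iUnion_isLinExt.antisymm ?_⟩
  exact closure_minimal (Set.iUnion₂_subset fun R hR => braidCone_subset_preposetCone hR.2.2)
    (isClosed_preposetCone Q)

end BraidFan
end
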